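/- arXiv:2305.04668 — 2 statements merged into one kernel-verified Lean document; each statement's English description precedes it below -/
import Mathlib

section
/- Let p : Y → X be a local homeomorphism between topological spaces with Y Hausdorff. If γ : [0,1] → X is a path and γ₁, γ₂ : [0,1] → Y are continuous maps with p ∘ γ₁ = γ = p ∘ γ₂ and γ₁(0) = γ₂(0), then γ₁ = γ₂. -/
/-- Let `p : Y → X` be a local homeomorphism with `Y` Hausdorff.
If `γ : [0,1] → X` is a path and `γ₁, γ₂ : [0,1] → Y` are continuous with
`p ∘ γ₁ = γ = p ∘ γ₂` and `γ₁ 0 = γ₂ 0`, then `γ₁ = γ₂`. -/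
theorem unique_path_lift_of_isLocalHomeomorph {X Y : Type*} [TopologicalSpace X]
    [TopologicalSpace Y] [T2Space Y] {p : Y → X} (hp : IsLocalHomeomorph p)
    (γ : C(unitInterval, X)) (γ₁ γ₂ : C(unitInterval, Y))
    (h₁ : p ∘ γ₁ = γ) (h₂ : p ∘ γ₂ = γ) (h0 : γ₁ 0 = γ₂ 0) : γ₁ = γ₂ := by
  have hsep : IsSeparatedMap p := T2Space.isSeparatedMap p
  have hinj : IsLocallyInjective p := hp.isLocallyInjective
  ext t
  exact congrFun (hsep.eq_of_comp_eq hinj γ₁.continuous γ₂.continuous (h₁.trans h₂.symm) 0 h0) t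
end

section
/- Let p : Y → X be a surjective local homeomorphism with X locally path connected and semilocally simply connected and Y Hausdorff. If Y admits an action of the fundamental groupoid Π₁(X) with momentum map p (i.e., a functorial continuous action where [γ] maps p⁻¹(γ(0)) to p⁻¹(γ(1))), then p is a covering map. -/
/-!
Fix `x`, a path-connected open neighbourhood `V` of `x` whose loops are null-homotopic in `X`,
and for each `u ∈ V` a path `Γ u` from `x` to `u` inside `V`; any two such paths are homotopic.
Then `(u, y) ↦ [Γ u] • y` identifies `V × p⁻¹(x)` with `p⁻¹(V)`, with inverse
`z ↦ (p z, [Γ (p z)]⁻¹ • z)`. Continuity comes from unique path lifting: `t ↦ [γ|[0,t]] • y` is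
a lift of `γ`, so along a path inside the target of a chart of `p` the action is the chart
inverse. Near `u₀` we have `[Γ u] = [Γ u₀ · δ]` with `δ` inside such a chart, hence
`u ↦ [Γ u] • y` is locally a chart inverse.
-/

open Set Topology

section Homotopy

variable {X : Type*} [TopologicalSpace X]

def LoopsNullhomotopicIn (U : Set X) : Prop :=
  ∀ (z : X) (γ : Path z z), range γ ⊆ U → γ.Homotopic (Path.refl z)

theorem LoopsNullhomotopicIn.mono {U V : Set X} (hU : LoopsNullhomotopicIn U) (hVU : V ⊆ U) :
    LoopsNullhomotopicIn V :=
  fun z γ hγ => hU z γ (hγ.trans hVU)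

open Path.Homotopic.Quotient in
theorem LoopsNullhomotopicIn.homotopic {U : Set X} (hU : LoopsNullhomotopicIn U) {a b : X}
    {γ γ' : Path a b} (hγ : range γ ⊆ U) (hγ' : range γ' ⊆ U) : γ.Homotopic γ' := by
  have hloop : (mk γ).trans (mk γ').symm = refl a := by
    rw [← mk_symm, ← mk_trans, ← mk_refl, eq]
    exact hU a _ (by rw [Path.trans_range, Path.symm_range]; exact union_subset hγ hγ')
  rw [← eq]
  calc mk γ = ((mk γ).trans (mk γ').symm).trans (mk γ') := by simp
    _ = mk γ' := by rw [hloop, refl_trans]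

end Homotopy

theorem IsLocalHomeomorph.discreteTopology_fiber {X Y : Type*} [TopologicalSpace X]
    [TopologicalSpace Y] {p : Y → X} (hp : IsLocalHomeomorph p) (x : X) :
    DiscreteTopology (p ⁻¹' {x}) :=
  (IsDiscrete.of_openPartialHomeomorph p subset_rfl fun y _ =>
    (hp y).imp fun _ h => ⟨h.1, h.2.symm⟩).to_subtype

structure FundamentalGroupoidAction {X Y : Type*} [TopologicalSpace X] [TopologicalSpace Y]
    (p : Y → X) where
  act : ∀ {x x' : X}, Path.Homotopic.Quotient x x' → Y → Y
  p_act : ∀ {x x' : X} (γ : Path x x') (y : Y), p y = x → p (act ⟦γ⟧ y) = x'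
  act_refl : ∀ (x : X) (y : Y), p y = x → act ⟦Path.refl x⟧ y = y
  act_trans : ∀ {x x' x'' : X} (γ : Path x x') (δ : Path x' x'') (y : Y), p y = x →
    act ⟦γ.trans δ⟧ y = act ⟦δ⟧ (act ⟦γ⟧ y)
  continuous_act_truncate : ∀ {x x' : X} (γ : Path x x') (y : Y), p y = x →
    Continuous fun t : unitInterval => act ⟦γ.truncate 0 (t : ℝ)⟧ y

namespace FundamentalGroupoidAction

variable {X Y : Type*} [TopologicalSpace X] [TopologicalSpace Y] {p : Y → X}
  (A : FundamentalGroupoidAction p)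

theorem act_cast {a b a' b' : X} (γ : Path.Homotopic.Quotient a b) (ha : a' = a) (hb : b' = b)
    (y : Y) : A.act (γ.cast ha hb) y = A.act γ y := by
  subst ha hb
  rw [Path.Homotopic.Quotient.cast_rfl_rfl]

theorem act_symm_act {a b : X} (γ : Path a b) {y : Y} (hy : p y = a) :
    A.act ⟦γ.symm⟧ (A.act ⟦γ⟧ y) = y := by
  rw [← A.act_trans γ γ.symm y hy, Quotient.sound (Path.Homotopic.trans_symm γ),
    A.act_refl a y hy]

theorem act_act_symm {a b : X} (γ : Path a b) {y : Y} (hy : p y = b) :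
    A.act ⟦γ⟧ (A.act ⟦γ.symm⟧ y) = y := by
  simpa using A.act_symm_act γ.symm hy

theorem act_eq_of_lift [T2Space Y] (hp : IsLocalHomeomorph p) {a b : X} (γ : Path a b) {y : Y}
    (hy : p y = a) {L : unitInterval → Y} (hL : Continuous L) (hpL : p ∘ L = γ)
    (hL0 : L 0 = y) : A.act ⟦γ⟧ y = L 1 := by
  have hstart (t : unitInterval) : p y = γ.extend (min 0 t) := by
    rw [min_eq_left t.2.1, Path.extend_zero, hy]
  have hlift := (T2Space.isSeparatedMap p).eq_of_comp_eq hp.isLocallyInjective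
    (A.continuous_act_truncate γ y hy) hL ?_ 0 ?_
  · simpa [Path.truncate_zero_one, act_cast] using congr_fun hlift 1
  · funext t
    rw [Function.comp_apply, A.p_act _ y (hstart t), Path.extend_extends', ← hpL]
  · simp only [Set.Icc.coe_zero, Path.truncate_zero_zero]
    rw [hL0]
    exact (A.act_cast ⟦Path.refl a⟧ _ _ y).trans (A.act_refl a y hy)

theorem act_eq_symm_of_range_subset_target [T2Space Y] (hp : IsLocalHomeomorph p)
    {e : OpenPartialHomeomorph Y X} (he : p = e) {a b : X} (γ : Path a b)
    (hγ : range γ ⊆ e.target) {y : Y} (hy : y ∈ e.source) (hpy : p y = a) :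
    A.act ⟦γ⟧ y = e.symm b := by
  have hγ' (t : unitInterval) : γ t ∈ e.target := hγ ⟨t, rfl⟩
  refine (A.act_eq_of_lift hp γ hpy (e.continuousOn_symm.comp_continuous γ.continuous hγ')
    (funext fun t => ?_) ?_).trans (congr_arg e.symm γ.target)
  · simp [he, e.right_inv (hγ' t)]
  · simp [← hpy, he, e.left_inv hy]

section LocalTrivialization

variable {V : Set X} {x : X} (Γ : ∀ u : V, Path x u)

theorem continuous_act [T2Space Y] [LocallyPathConnectedSpace X] (hp : IsLocalHomeomorph p)
    (hVo : IsOpen V) (hV : LoopsNullhomotopicIn V) (hΓ : ∀ u, range (Γ u) ⊆ V) {y : Y}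
    (hy : p y = x) : Continuous fun u : V => A.act ⟦Γ u⟧ y := by
  refine continuous_iff_continuousAt.mpr fun u₀ => ?_
  obtain ⟨e, hze, he⟩ := hp (A.act ⟦Γ u₀⟧ y)
  have hu₀ : (u₀ : X) ∈ e.target := by
    simpa only [← he, A.p_act (Γ u₀) y hy] using e.map_source hze
  have hW : pathComponentIn (V ∩ e.target) u₀ ∈ 𝓝 (u₀ : X) :=
    pathComponentIn_mem_nhds ((hVo.inter e.open_target).mem_nhds ⟨u₀.2, hu₀⟩)
  have hsection : (fun u : V => A.act ⟦Γ u⟧ y) =ᶠ[𝓝 u₀] fun u => e.symm u := by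
    filter_upwards [continuous_subtype_val.continuousAt.preimage_mem_nhds hW] with u hu
    obtain ⟨δ, hδ⟩ := hu
    have hΓu : (⟦Γ u⟧ : Path.Homotopic.Quotient x u) = ⟦(Γ u₀).trans δ⟧ :=
      Quotient.sound <| hV.homotopic (hΓ u) <| by
        rw [Path.trans_range]
        exact union_subset (hΓ u₀) (range_subset_iff.2 fun t => (hδ t).1)
    rw [hΓu, A.act_trans _ _ y hy]
    exact A.act_eq_symm_of_range_subset_target hp he δ (range_subset_iff.2 fun t => (hδ t).2)
      hze (A.p_act _ y hy)
  exact ((e.continuousAt_symm hu₀).comp continuous_subtype_val.continuousAt).congr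
    hsection.symm

def equivProdFiber : p ⁻¹' V ≃ V × p ⁻¹' {x} where
  toFun z := (⟨p z, z.2⟩, ⟨A.act ⟦(Γ ⟨p z, z.2⟩).symm⟧ z, A.p_act _ _ rfl⟩)
  invFun w := ⟨A.act ⟦Γ w.1⟧ w.2, by
    rw [mem_preimage, A.p_act _ _ w.2.2]
    exact w.1.2⟩
  left_inv z := Subtype.ext (A.act_act_symm _ rfl)
  right_inv := by
    rintro ⟨u, y, hy⟩
    have hu : p (A.act ⟦Γ u⟧ y) = u := A.p_act _ _ hy
    refine Prod.ext (Subtype.ext hu) (Subtype.ext ?_)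
    have hback (v : V) (hv : v = u) : A.act ⟦(Γ v).symm⟧ (A.act ⟦Γ u⟧ y) = y := by
      subst hv
      exact A.act_symm_act _ hy
    exact hback _ (Subtype.ext hu)

variable [T2Space Y] [LocallyPathConnectedSpace X] (hp : IsLocalHomeomorph p) (hVo : IsOpen V)
  (hV : LoopsNullhomotopicIn V) (hΓ : ∀ u, range (Γ u) ⊆ V)

def homeomorphProdFiber : p ⁻¹' V ≃ₜ V × p ⁻¹' {x} where
  toEquiv := A.equivProdFiber Γ
  continuous_toFun := by
    have := hp.discreteTopology_fiber x
    have hbase : Continuous fun z : p ⁻¹' V => (⟨p z, z.2⟩ : V) :=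
      (hp.continuous.comp continuous_subtype_val).subtype_mk _
    refine hbase.prodMk (continuous_discrete_rng.mpr fun y => ?_)
    have hsheet : IsOpen {z : p ⁻¹' V | (z : Y) = A.act ⟦Γ ⟨p z, z.2⟩⟧ y} :=
      hp.isLocallyInjective.isOpen_eqLocus continuous_subtype_val
        ((A.continuous_act Γ hp hVo hV hΓ y.2).comp hbase)
        (funext fun z => (A.p_act _ _ y.2).symm)
    convert hsheet using 1
    ext z
    let E := A.equivProdFiber Γ
    change (E z).2 = y ↔ (z : Y) = (E.symm ((E z).1, y) : Y)
    rw [← Subtype.ext_iff, E.eq_symm_apply, Prod.ext_iff]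
    exact (and_iff_right rfl).symm
  continuous_invFun := by
    have := hp.discreteTopology_fiber x
    exact continuous_prod_of_discrete_right.mpr fun y =>
      (A.continuous_act Γ hp hVo hV hΓ y.2).subtype_mk _

end LocalTrivialization

end FundamentalGroupoidAction

theorem FundamentalGroupoidAction.isEvenlyCovered {X Y : Type*} [TopologicalSpace X]
    [TopologicalSpace Y] [T2Space Y] [LocallyPathConnectedSpace X] {p : Y → X}
    (A : FundamentalGroupoidAction p) (hp : IsLocalHomeomorph p) {V : Set X} (hVo : IsOpen V)
    (hV : LoopsNullhomotopicIn V) (hVc : IsPathConnected V) {x : X} (hx : x ∈ V) :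
    IsEvenlyCovered p x (p ⁻¹' {x}) :=
  ⟨hp.discreteTopology_fiber x, V, hx, hVo, hVo.preimage hp.continuous,
    A.homeomorphProdFiber (fun u => (hVc.joinedIn x hx u u.2).somePath) hp hVo hV
      (fun u => range_subset_iff.2 (hVc.joinedIn x hx u u.2).somePath_mem),
    fun _ => rfl⟩

theorem covering_of_fundamental_groupoid_action_general {X Y : Type*} [TopologicalSpace X]
    [TopologicalSpace Y] [T2Space Y] [LocallyPathConnectedSpace X]
    (hslsc : ∀ x : X, ∃ U ∈ nhds x, ∀ (z : X) (γ : Path z z),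
      Set.range γ ⊆ U → γ.Homotopic (Path.refl z))
    {p : Y → X} (hp : IsLocalHomeomorph p)
    (act : ∀ {x x' : X}, Path.Homotopic.Quotient x x' → Y → Y)
    (hmom : ∀ {x x' : X} (γ : Path x x') (y : Y), p y = x → p (act ⟦γ⟧ y) = x')
    (hid : ∀ (x : X) (y : Y), p y = x → act ⟦Path.refl x⟧ y = y)
    (hcomp : ∀ {x x' x'' : X} (γ : Path x x') (δ : Path x' x'') (y : Y), p y = x →
      act ⟦γ.trans δ⟧ y = act ⟦δ⟧ (act ⟦γ⟧ y))
    (hcont : ∀ {x x' : X} (γ : Path x x') (y : Y), p y = x →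
      Continuous fun t : unitInterval => act ⟦γ.truncate 0 (t : ℝ)⟧ y) :
    IsCoveringMap p := by
  let A : FundamentalGroupoidAction p := ⟨act, hmom, hid, hcomp, hcont⟩
  intro x
  obtain ⟨U, hU, hUnull⟩ := hslsc x
  obtain ⟨V, ⟨hVo, hxV, hVc⟩, hVU⟩ := (isOpen_isPathConnected_basis x).mem_iff.mp hU
  exact A.isEvenlyCovered hp hVo (LoopsNullhomotopicIn.mono hUnull hVU) hVc hxV

/-- Let `p : Y → X` be a surjective local homeomorphism with `Y`
Hausdorff and `X` locally path connected and semilocally simply connected. If `Y`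
carries a (continuous, functorial) action of the fundamental groupoid `Π₁(X)` with
momentum map `p`, then `p` is a covering map. -/
theorem covering_of_fundamental_groupoid_action {X Y : Type*} [TopologicalSpace X]
    [TopologicalSpace Y] [T2Space Y] [LocallyPathConnectedSpace X]
    (hslsc : ∀ x : X, ∃ U ∈ nhds x, ∀ (z : X) (γ : Path z z),
      Set.range γ ⊆ U → γ.Homotopic (Path.refl z))
    {p : Y → X} (hp : IsLocalHomeomorph p) (hsurj : Function.Surjective p)
    (act : ∀ {x x' : X}, Path.Homotopic.Quotient x x' → Y → Y)
    (hmom : ∀ {x x' : X} (γ : Path x x') (y : Y), p y = x → p (act ⟦γ⟧ y) = x')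
    (hid : ∀ (x : X) (y : Y), p y = x → act ⟦Path.refl x⟧ y = y)
    (hcomp : ∀ {x x' x'' : X} (γ : Path x x') (δ : Path x' x'') (y : Y), p y = x →
      act ⟦γ.trans δ⟧ y = act ⟦δ⟧ (act ⟦γ⟧ y))
    (hcont : ∀ {x x' : X} (γ : Path x x') (y : Y), p y = x →
      Continuous fun t : unitInterval => act ⟦γ.truncate 0 (t : ℝ)⟧ y) :
    IsCoveringMap p :=
  covering_of_fundamental_groupoid_action_general hslsc hp act hmom hid hcomp hcont
end
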